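/- Let G be a finite group with a strongly embedded subgroup M. Then G acts transitively by conjugation on its set of involutions, and M acts transitively by conjugation on the set of involutions contained in M. -/

import Mathlib

/-!
Let `G` act on the cosets `G ⧸ M`; `t` fixes `xM` iff `x⁻¹ t x ∈ M`, so strong embedding says
exactly that an involution fixes at most one coset. An involution `u ∈ M` fixes `M`, so `⟨u⟩` has a
single fixed point and `[G : M]` is odd; hence every involution fixes exactly one coset.
If the involutions `i, j` are not conjugate, then `ij` has even order (a power of `ij` would
otherwise conjugate `i` to `j`), and the involution of `⟨ij⟩` commutes with `i` and `j`, which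
therefore fix its unique fixed coset. Applied to `i` and all conjugates of `j`, this makes `j` fix
every coset, so `M = G`. Finally, `c i c⁻¹ ∈ M` for an involution `i ∈ M` forces `c ∈ M`.
-/

section Dihedral

variable {G : Type*} [Group G] {i j : G}

theorem semiconjBy_mul_inv_left (hi : i * i = 1) (hj : j * j = 1) :
    SemiconjBy i (i * j) (i * j)⁻¹ := by
  rw [SemiconjBy, mul_inv_rev, inv_eq_of_mul_eq_one_right hi, inv_eq_of_mul_eq_one_right hj,
    ← mul_assoc, hi, one_mul, mul_assoc, hi, mul_one]

theorem semiconjBy_mul_inv_right (hi : i * i = 1) (hj : j * j = 1) :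
    SemiconjBy j (i * j) (i * j)⁻¹ := by
  rw [SemiconjBy, mul_inv_rev, inv_eq_of_mul_eq_one_right hi, inv_eq_of_mul_eq_one_right hj,
    mul_assoc]

theorem isConj_of_odd_orderOf_mul (hi : i * i = 1) (hj : j * j = 1) (h : Odd (orderOf (i * j))) :
    IsConj i j := by
  obtain ⟨m, hm⟩ := h
  have hsemi := semiconjBy_mul_inv_left hi hj
  have hpow : (i * j) ^ m * (i * j) ^ m = (i * j)⁻¹ := eq_inv_of_mul_eq_one_left <| by
    rw [← pow_add, ← pow_succ, ← two_mul, ← hm, pow_orderOf_eq_one]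
  have hcomm : SemiconjBy i ((i * j) ^ m)⁻¹ ((i * j) ^ m) := by
    simpa only [inv_inv, inv_pow] using hsemi.inv_right.pow_right m
  have hj' : (i * j)⁻¹ * i = j := by rw [← hsemi.eq, ← mul_assoc, hi, one_mul]
  refine isConj_iff.mpr ⟨(i * j) ^ m, ?_⟩
  rw [mul_assoc, hcomm.eq, ← mul_assoc, hpow, hj']

theorem exists_involution_commute_of_even_orderOf_mul (hi : i * i = 1) (hj : j * j = 1)
    (h : Even (orderOf (i * j))) (h0 : orderOf (i * j) ≠ 0) :
    ∃ z : G, z * z = 1 ∧ z ≠ 1 ∧ Commute i z ∧ Commute j z := by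
  obtain ⟨k, hk⟩ := h
  have hz : (i * j) ^ k * (i * j) ^ k = 1 := by rw [← pow_add, ← hk, pow_orderOf_eq_one]
  have hzinv : ((i * j) ^ k)⁻¹ = (i * j) ^ k := inv_eq_of_mul_eq_one_right hz
  refine ⟨(i * j) ^ k, hz, pow_ne_one_of_lt_orderOf (by omega) (by omega), ?_, ?_⟩
  · have := (semiconjBy_mul_inv_left hi hj).pow_right k
    rwa [inv_pow, hzinv] at this
  · have := (semiconjBy_mul_inv_right hi hj).pow_right k
    rwa [inv_pow, hzinv] at this

end Dihedral

/-- `M ∩ gMg⁻¹` contains no involution for `g ∉ M`. -/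
def Subgroup.InvolutionFreeIntersections {G : Type*} [Group G] (M : Subgroup G) : Prop :=
  ∀ g ∉ M, ∀ t ∈ M, g⁻¹ * t * g ∈ M → t * t = 1 → t = 1

theorem isPGroup_two_zpowers {G : Type*} [Group G] {t : G} (ht : t * t = 1) :
    IsPGroup 2 (Subgroup.zpowers t) := by
  obtain ⟨m, -, hm⟩ := (Nat.dvd_prime_pow Nat.prime_two).1
    (orderOf_dvd_of_pow_eq_one (by rw [pow_one, pow_two, ht]) : orderOf t ∣ 2 ^ 1)
  exact IsPGroup.of_card ((Nat.card_zpowers t).trans hm)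

namespace Subgroup

variable {G : Type*} [Group G] {M : Subgroup G}

theorem involutionFreeIntersections_of_odd_card_inf
    (hstr : ∀ g : G, g ∉ M →
      Odd (Nat.card (M ⊓ Subgroup.map (MulAut.conj g).toMonoidHom M : Subgroup G))) :
    M.InvolutionFreeIntersections := by
  intro g hg t ht htg ht2
  by_contra ht1
  have hmem : t ∈ M ⊓ M.map (MulAut.conj g).toMonoidHom :=
    mem_inf.mpr ⟨ht, mem_map_equiv.mpr (by simpa [MulAut.conj] using htg)⟩
  have horder : orderOf (⟨t, hmem⟩ : ↥(M ⊓ M.map (MulAut.conj g).toMonoidHom)) = 2 :=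
    orderOf_eq_prime (by rw [pow_two]; exact Subtype.ext ht2)
      (fun h => ht1 (congrArg Subtype.val h))
  exact (Nat.not_even_iff_odd.mpr (hstr g hg))
    (even_iff_two_dvd.mpr (horder ▸ _root_.orderOf_dvd_natCard _))

theorem smul_mk_eq_self_iff {t x : G} : t • (x : G ⧸ M) = x ↔ x⁻¹ * t * x ∈ M := by
  rw [MulAction.Quotient.smul_mk, QuotientGroup.eq, ← M.inv_mem_iff]
  simp [mul_assoc]

theorem exists_smul_eq_self_of_odd_index (hodd : Odd M.index) {t : G} (ht : t * t = 1) :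
    ∃ q : G ⧸ M, t • q = q := by
  have : Fact (Nat.Prime 2) := ⟨Nat.prime_two⟩
  obtain ⟨q, hq⟩ := (isPGroup_two_zpowers ht).nonempty_fixed_point_of_prime_not_dvd_card (G ⧸ M)
    (Nat.two_dvd_ne_zero.mpr (Nat.odd_iff.mp hodd))
  exact ⟨q, hq ⟨t, mem_zpowers t⟩⟩

namespace InvolutionFreeIntersections

variable (hM : M.InvolutionFreeIntersections)
include hM

theorem eq_of_smul_eq_self {t : G} (ht : t * t = 1) (ht1 : t ≠ 1) {p q : G ⧸ M}
    (hp : t • p = p) (hq : t • q = q) : p = q := by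
  induction p using QuotientGroup.induction_on with | H x => ?_
  induction q using QuotientGroup.induction_on with | H y => ?_
  rw [smul_mk_eq_self_iff] at hp hq
  refine QuotientGroup.eq.mpr (by_contra fun hxy => ht1 ?_)
  have hsq : x⁻¹ * t * x * (x⁻¹ * t * x) = 1 := by
    rw [show x⁻¹ * t * x * (x⁻¹ * t * x) = x⁻¹ * (t * t) * x by group, ht]
    group
  exact (conj_eq_one_iff (a := x⁻¹)).mp
    (by simpa using hM (x⁻¹ * y) hxy _ hp (by simpa [mul_assoc] using hq) hsq)

theorem smul_eq_self_of_commute {z : G} (hz : z * z = 1) (hz1 : z ≠ 1) {q : G ⧸ M}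
    (hq : z • q = q) {g : G} (hg : Commute g z) : g • q = q :=
  hM.eq_of_smul_eq_self hz hz1 (by rw [smul_smul, ← hg.eq, mul_smul, hq]) hq

theorem odd_index [Finite G] (hMeven : Even (Nat.card M)) : Odd M.index := by
  have : Fact (Nat.Prime 2) := ⟨Nat.prime_two⟩
  obtain ⟨u, hu⟩ := exists_prime_orderOf_dvd_card' 2 (even_iff_two_dvd.mp hMeven)
  have hu2 : (u : G) * u = 1 := by
    rw [← Subgroup.coe_mul, ← pow_two, ← hu, pow_orderOf_eq_one, Subgroup.coe_one]
  have hu1 : (u : G) ≠ 1 := fun h => by simp [OneMemClass.coe_eq_one.mp h] at hu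
  have hfix : Nat.card (MulAction.fixedPoints (zpowers (u : G)) (G ⧸ M)) = 1 := by
    refine Nat.card_eq_one_iff_exists.mpr ⟨⟨(1 : G), fun g => ?_⟩, fun q => Subtype.ext ?_⟩
    · exact smul_mk_eq_self_iff.mpr (by simpa using zpowers_le.mpr u.2 g.2)
    · exact hM.eq_of_smul_eq_self hu2 hu1 (q.2 ⟨u, mem_zpowers _⟩)
        (smul_mk_eq_self_iff.mpr (by simp))
  have := (isPGroup_two_zpowers hu2).card_modEq_card_fixedPoints (G ⧸ M)
  rw [hfix] at this
  exact Nat.odd_iff.mpr this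

theorem exists_common_fixedPoint_of_not_isConj [Finite G] (hodd : Odd M.index) {i j : G}
    (hi : i * i = 1) (hj : j * j = 1) (h : ¬IsConj i j) :
    ∃ q : G ⧸ M, i • q = q ∧ j • q = q := by
  have heven : Even (orderOf (i * j)) :=
    Nat.not_odd_iff_even.mp fun hodd => h (isConj_of_odd_orderOf_mul hi hj hodd)
  obtain ⟨z, hz, hz1, hiz, hjz⟩ :=
    exists_involution_commute_of_even_orderOf_mul hi hj heven (orderOf_pos _).ne'
  obtain ⟨q, hq⟩ := exists_smul_eq_self_of_odd_index hodd hz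
  exact ⟨q, hM.smul_eq_self_of_commute hz hz1 hq hiz, hM.smul_eq_self_of_commute hz hz1 hq hjz⟩

theorem isConj_of_mul_self_eq_one [Finite G] (hodd : Odd M.index) (hne : M ≠ ⊤) {i j : G}
    (hi : i * i = 1) (hi1 : i ≠ 1) (hj : j * j = 1) (hj1 : j ≠ 1) : IsConj i j := by
  by_contra h
  obtain ⟨q, hq⟩ := exists_smul_eq_self_of_odd_index hodd hi
  -- every conjugate of `j` shares a fixed point with `i`, and that point can only be `q`
  have hfix : ∀ p : G ⧸ M, j • p = p := by
    intro p
    obtain ⟨g, rfl⟩ := MulAction.exists_smul_eq G q p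
    have hj' : (g⁻¹ * j * g) * (g⁻¹ * j * g) = 1 := by
      rw [show g⁻¹ * j * g * (g⁻¹ * j * g) = g⁻¹ * (j * j) * g by group, hj]
      group
    obtain ⟨q', hiq', hjq'⟩ := hM.exists_common_fixedPoint_of_not_isConj hodd hi hj'
      fun hc => h (hc.trans (isConj_iff.mpr ⟨g, by group⟩))
    rw [hM.eq_of_smul_eq_self hi hi1 hiq' hq] at hjq'
    simpa [mul_smul] using congrArg (g • ·) hjq'
  exact hne (QuotientGroup.subgroup_eq_top_of_subsingleton M
    ⟨fun p p' => hM.eq_of_smul_eq_self hj hj1 (hfix p) (hfix p')⟩)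

theorem mem_of_conj_mem {i c : G} (hi : i ∈ M) (hi2 : i * i = 1) (hi1 : i ≠ 1)
    (hc : c * i * c⁻¹ ∈ M) : c ∈ M := by
  by_contra hc'
  exact hi1 (hM c⁻¹ (M.inv_mem_iff.not.mpr hc') i hi (by simpa using hc) hi2)

end InvolutionFreeIntersections

end Subgroup

/-- Let `G` be a finite group with a strongly embedded subgroup `M`. Then `G`
acts transitively by conjugation on its set of involutions, and `M` acts transitively by
conjugation on the set of involutions contained in `M`. -/
theorem stmt_15 (G : Type*) [Group G] [Finite G] (M : Subgroup G)
    (hM : M ≠ ⊤) (hMeven : Even (Nat.card M))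
    (hstr : ∀ g : G, g ∉ M →
      Odd (Nat.card (M ⊓ Subgroup.map (MulAut.conj g).toMonoidHom M : Subgroup G))) :
    (∀ i j : G, i * i = 1 → i ≠ 1 → j * j = 1 → j ≠ 1 → IsConj i j) ∧
    (∀ i j : G, i ∈ M → j ∈ M → i * i = 1 → i ≠ 1 → j * j = 1 → j ≠ 1 →
      ∃ m ∈ M, m * i * m⁻¹ = j) := by
  have hfree := Subgroup.involutionFreeIntersections_of_odd_card_inf hstr
  have hodd := hfree.odd_index hMeven
  have hconj : ∀ i j : G, i * i = 1 → i ≠ 1 → j * j = 1 → j ≠ 1 → IsConj i j :=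
    fun _ _ => hfree.isConj_of_mul_self_eq_one hodd hM
  refine ⟨hconj, fun i j hiM hjM hi hi1 hj hj1 => ?_⟩
  obtain ⟨c, hc⟩ := isConj_iff.mp (hconj i j hi hi1 hj hj1)
  exact ⟨c, hfree.mem_of_conj_mem hiM hi hi1 (hc ▸ hjM), hc⟩
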